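/- Termination and correctness of the basic divide-and-conquer dynamic program: define recursively DCDP(I) for nonempty finite I ⊆ {1,…,n} by: compute p₀ maximizing J over S_L(I); if p₀ ∈ S(I), return p₀; otherwise split I into two disjoint nonempty subsets I₁, I₂ with I₁ ∪ I₂ = I, recursively compute p₁ = DCDP(I₁), p₂ = DCDP(I₂), and return whichever has larger J-value. Then this recursion terminates and DCDP(N_n) maximizes J over S(N_n), provided S(J') is nonempty for every subset J' encountered. -/

import Mathlib

/-! Correctness is by strong induction on `|I|`: a feasible maximizer over the relaxation
`S_L(I) ⊇ S(I)` maximizes over `S(I)`, and otherwise `S(I) = S(I₁) ∪ S(I₂)`, so the better of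
maximizers over the two parts maximizes over the whole. A solution of the recursion is obtained by
well-founded recursion on `|I|`, splitting `I` into `{a}` and `I \ {a}`; splitting is only needed
when `|I| ≥ 2`, because `S_L({h}) = S({h})`, so a relaxed maximizer on a singleton is feasible. -/

open Set

/-- Feasible region `S(I)`: tuples `p ∈ {1,…,n}^{m+1}` with last entry in `I`,
chain constraints `|p_i − p_{i+1}| ≤ ς`, and wrap constraint `|p_last − p_0| ≤ ς`. -/
def SReg (n m ς : ℕ) (I : Set ℤ) : Set (Fin (m+1) → ℤ) :=
  {p | (∀ i, 1 ≤ p i ∧ p i ≤ (n : ℤ)) ∧ p (Fin.last m) ∈ I ∧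
       (∀ i : Fin m, |p i.castSucc - p i.succ| ≤ (ς : ℤ)) ∧
       |p (Fin.last m) - p 0| ≤ (ς : ℤ)}

/-- Relaxed region `S_L(I)`: the wrap constraint is dropped; instead the first
entry must lie in `I + [−ς, ς]`. -/
def SLReg (n m ς : ℕ) (I : Set ℤ) : Set (Fin (m+1) → ℤ) :=
  {p | (∀ i, 1 ≤ p i ∧ p i ≤ (n : ℤ)) ∧ p (Fin.last m) ∈ I ∧
       (∃ j ∈ I, |p 0 - j| ≤ (ς : ℤ)) ∧
       (∀ i : Fin m, |p i.castSucc - p i.succ| ≤ (ς : ℤ))}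

/-- The recursive specification of the basic divide-and-conquer dynamic program
`DCDP_Basic`: on every nonempty finite `I ⊆ {1,…,n}`, either `F I` is a
maximizer of `J` over the relaxed region `S_L(I)` that happens to be feasible
(so it is returned directly), or every relaxed maximizer is infeasible and
`F I` is whichever of the two recursive results `F I₁`, `F I₂` (for some split
of `I` into disjoint nonempty `I₁ ∪ I₂ = I`) has the larger `J`-value. -/
def DCDPBasicSpec (n m ς : ℕ) (J : (Fin (m+1) → ℤ) → ℝ)
    (F : Set ℤ → (Fin (m+1) → ℤ)) : Prop :=
  ∀ I : Set ℤ, I.Finite → I.Nonempty → I ⊆ Set.Icc 1 (n : ℤ) →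
    ((F I ∈ SLReg n m ς I ∧ (∀ q ∈ SLReg n m ς I, J q ≤ J (F I)) ∧
        F I ∈ SReg n m ς I) ∨
     ((∀ pL ∈ SLReg n m ς I, (∀ q ∈ SLReg n m ς I, J q ≤ J pL) →
          pL ∉ SReg n m ς I) ∧
      ∃ I₁ I₂ : Set ℤ, Disjoint I₁ I₂ ∧ I₁.Nonempty ∧ I₂.Nonempty ∧ I₁ ∪ I₂ = I ∧
        F I = (if J (F I₂) ≤ J (F I₁) then F I₁ else F I₂)))

section Regions

variable {n m ς : ℕ}

lemma sReg_subset_sLReg (I : Set ℤ) : SReg n m ς I ⊆ SLReg n m ς I := by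
  rintro p ⟨hbound, hlast, hchain, hwrap⟩
  exact ⟨hbound, hlast, ⟨p (Fin.last m), hlast, by rwa [abs_sub_comm]⟩, hchain⟩

lemma sLReg_finite (I : Set ℤ) : (SLReg n m ς I).Finite :=
  (Set.Finite.pi fun _ => Set.finite_Icc (1 : ℤ) n).subset fun _ hp i _ => hp.1 i

lemma sLReg_singleton (h : ℤ) : SLReg n m ς {h} = SReg n m ς {h} := by
  ext p
  simp only [SLReg, SReg, mem_ofPred_eq, mem_singleton_iff, exists_eq_left]
  constructor
  · rintro ⟨hbound, hlast, hfirst, hchain⟩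
    exact ⟨hbound, hlast, hchain, by rwa [hlast, abs_sub_comm]⟩
  · rintro ⟨hbound, hlast, hchain, hwrap⟩
    exact ⟨hbound, hlast, by rwa [← hlast, abs_sub_comm], hchain⟩

lemma sReg_union (I₁ I₂ : Set ℤ) : SReg n m ς (I₁ ∪ I₂) = SReg n m ς I₁ ∪ SReg n m ς I₂ := by
  ext p
  simp only [SReg, mem_ofPred_eq, mem_union]
  tauto

lemma const_mem_sReg_singleton {h : ℤ} (hh : h ∈ Icc 1 (n : ℤ)) :
    (fun _ => h) ∈ SReg n m ς {h} :=
  ⟨fun _ => hh, rfl, fun _ => by simp, by simp⟩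

end Regions

theorem IsMaxOn.ite_union {α β : Type*} [LinearOrder β] {f : α → β} {s t : Set α} {a b : α}
    (ha : IsMaxOn f s a) (hb : IsMaxOn f t b) :
    IsMaxOn f (s ∪ t) (if f b ≤ f a then a else b) := by
  rw [isMaxOn_iff] at *
  rintro x (hx | hx) <;> split_ifs with hab
  exacts [ha x hx, (ha x hx).trans (le_of_not_ge hab), (hb x hx).trans hab, hb x hx]

def IsFeasibleRelaxedMax (n m ς : ℕ) (J : (Fin (m+1) → ℤ) → ℝ) (I : Set ℤ)
    (p : Fin (m+1) → ℤ) : Prop :=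
  p ∈ SLReg n m ς I ∧ (∀ q ∈ SLReg n m ς I, J q ≤ J p) ∧ p ∈ SReg n m ς I

section Solution

variable {n m ς : ℕ} {J : (Fin (m+1) → ℤ) → ℝ} {I : Set ℤ}

lemma exists_isFeasibleRelaxedMax_singleton {h : ℤ} (hh : h ∈ Icc 1 (n : ℤ)) :
    ∃ p, IsFeasibleRelaxedMax n m ς J {h} p := by
  obtain ⟨p, hp, hmax⟩ := exists_max_image _ J (sLReg_finite {h})
    ⟨_, sReg_subset_sLReg _ (const_mem_sReg_singleton hh)⟩
  exact ⟨p, hp, hmax, sLReg_singleton h ▸ hp⟩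

lemma one_lt_ncard_of_not_exists_isFeasibleRelaxedMax (hfin : I.Finite) (hne : I.Nonempty)
    (hI : I ⊆ Icc 1 (n : ℤ)) (h : ¬ ∃ p, IsFeasibleRelaxedMax n m ς J I p) :
    1 < I.ncard := by
  by_contra hle
  obtain ⟨a, rfl⟩ := (ncard_eq_one (s := I)).1 (by have := (ncard_pos hfin).2 hne; omega)
  exact h (exists_isFeasibleRelaxedMax_singleton (hI rfl))

open Classical in
noncomputable def dcdp (n m ς : ℕ) (J : (Fin (m+1) → ℤ) → ℝ) (I : Set ℤ) : Fin (m+1) → ℤ :=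
  if h : ∃ p, IsFeasibleRelaxedMax n m ς J I p then h.choose
  else if hI : 1 < I.ncard then
    let a := (nonempty_of_ncard_ne_zero (by omega : I.ncard ≠ 0)).some
    if J (dcdp n m ς J (I \ {a})) ≤ J (dcdp n m ς J {a}) then dcdp n m ς J {a}
    else dcdp n m ς J (I \ {a})
  else 0
termination_by I.ncard
decreasing_by
  · exact ncard_sdiff_singleton_lt_of_mem (Nonempty.some_mem _) (finite_of_ncard_pos (by omega))
  · simpa using hI

theorem dcdp_spec (n m ς : ℕ) (J : (Fin (m+1) → ℤ) → ℝ) :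
    DCDPBasicSpec n m ς J (dcdp n m ς J) := by
  intro I hfin hne hI
  by_cases h : ∃ p, IsFeasibleRelaxedMax n m ς J I p
  · left
    rw [show dcdp n m ς J I = h.choose by rw [dcdp, dif_pos h]]
    exact h.choose_spec
  right
  refine ⟨fun p hp hmax hmem => h ⟨p, hp, hmax, hmem⟩, ?_⟩
  have hcard := one_lt_ncard_of_not_exists_isFeasibleRelaxedMax hfin hne hI h
  have haI := (nonempty_of_ncard_ne_zero (by omega : I.ncard ≠ 0)).some_mem
  refine ⟨_, _, disjoint_sdiff_right, singleton_nonempty _, ?_,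
    union_sdiff_cancel (singleton_subset_iff.2 haI), ?_⟩
  · exact nonempty_of_ncard_ne_zero (by rw [ncard_sdiff_singleton_of_mem haI]; omega)
  · conv_lhs => rw [dcdp, dif_neg h, dif_pos hcard]

theorem DCDPBasicSpec.mem_sReg_isMaxOn {F : Set ℤ → (Fin (m+1) → ℤ)}
    (hF : DCDPBasicSpec n m ς J F) (hfin : I.Finite) (hne : I.Nonempty)
    (hI : I ⊆ Icc 1 (n : ℤ)) :
    F I ∈ SReg n m ς I ∧ IsMaxOn J (SReg n m ς I) (F I) := by
  induction hk : I.ncard using Nat.strong_induction_on generalizing I with | _ k ih =>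
  rcases hF I hfin hne hI with ⟨-, hmax, hmem⟩ | ⟨-, I₁, I₂, hdisj, hne₁, hne₂, rfl, hFI⟩
  · exact ⟨hmem, isMaxOn_iff.2 fun q hq => hmax q (sReg_subset_sLReg _ hq)⟩
  obtain ⟨hfin₁, hfin₂⟩ := finite_union.1 hfin
  have hcard := ncard_union_eq hdisj hfin₁ hfin₂
  have hpos₁ := (ncard_pos hfin₁).2 hne₁
  have hpos₂ := (ncard_pos hfin₂).2 hne₂
  obtain ⟨hmem₁, hmax₁⟩ := ih _ (by omega) hfin₁ hne₁ (subset_union_left.trans hI) rfl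
  obtain ⟨hmem₂, hmax₂⟩ := ih _ (by omega) hfin₂ hne₂ (subset_union_right.trans hI) rfl
  rw [hFI, sReg_union]
  refine ⟨?_, hmax₁.ite_union hmax₂⟩
  split_ifs
  exacts [Or.inl hmem₁, Or.inr hmem₂]

end Solution

theorem dcdp_basic_correct_general (n m ς : ℕ) (hn : 1 ≤ n)
    (J : (Fin (m+1) → ℤ) → ℝ) :
    (∃ F : Set ℤ → (Fin (m+1) → ℤ), DCDPBasicSpec n m ς J F) ∧
    (∀ F : Set ℤ → (Fin (m+1) → ℤ), DCDPBasicSpec n m ς J F →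
      F (Set.Icc 1 (n : ℤ)) ∈ SReg n m ς (Set.Icc 1 (n : ℤ)) ∧
      ∀ q ∈ SReg n m ς (Set.Icc 1 (n : ℤ)), J q ≤ J (F (Set.Icc 1 (n : ℤ)))) := by
  refine ⟨⟨dcdp n m ς J, dcdp_spec n m ς J⟩, fun F hF => ?_⟩
  obtain ⟨hmem, hmax⟩ :=
    hF.mem_sReg_isMaxOn (finite_Icc _ _) (nonempty_Icc.2 (by exact_mod_cast hn)) subset_rfl
  exact ⟨hmem, isMaxOn_iff.1 hmax⟩

/-- termination and correctness of the basic
divide-and-conquer dynamic program: some total function satisfies the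
recursive specification (the recursion terminates), and every function
satisfying it returns a maximizer of `J` over `S(N_n)` on input `N_n`. -/
theorem dcdp_basic_correct (n m ς : ℕ) (hn : 1 ≤ n) (hς : 1 ≤ ς)
    (L : Fin (m+1) → ℤ → ℝ) (J : (Fin (m+1) → ℤ) → ℝ)
    (hJ : J = fun p => ∑ i, L i (p i)) :
    (∃ F : Set ℤ → (Fin (m+1) → ℤ), DCDPBasicSpec n m ς J F) ∧
    (∀ F : Set ℤ → (Fin (m+1) → ℤ), DCDPBasicSpec n m ς J F →
      F (Set.Icc 1 (n : ℤ)) ∈ SReg n m ς (Set.Icc 1 (n : ℤ)) ∧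
      ∀ q ∈ SReg n m ς (Set.Icc 1 (n : ℤ)), J q ≤ J (F (Set.Icc 1 (n : ℤ)))) :=
  dcdp_basic_correct_general n m ς hn J
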